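/- arXiv:2303.17310 — 6 statements merged into one kernel-verified Lean document; each statement's English description precedes it below -/
import Mathlib

section
/- For a strictly copositive symmetric n×n real matrix B, the set Min_COP(B) = { v ∈ ℤ₊ⁿ \ {0} : B[v] = min_COP(B) } of vectors attaining the copositive minimum is finite. -/
open Matrix

/-- The quadratic form `x ↦ xᵀ B x`. -/
def qf {n : ℕ} (B : Matrix (Fin n) (Fin n) ℝ) (x : Fin n → ℝ) : ℝ := x ⬝ᵥ B.mulVec x

/-- Coercion of an integer vector to a real vector. -/
def intCast {n : ℕ} (v : Fin n → ℤ) : Fin n → ℝ := fun i => (v i : ℝ)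

/-- `B` is strictly copositive: `xᵀBx > 0` for all nonzero nonnegative `x`. -/
def StrictlyCopositive {n : ℕ} (B : Matrix (Fin n) (Fin n) ℝ) : Prop :=
  ∀ x : Fin n → ℝ, (∀ i, 0 ≤ x i) → x ≠ 0 → 0 < qf B x

/-- The copositive minimum: infimum of `vᵀBv` over nonzero nonnegative integer vectors. -/
noncomputable def copoMin {n : ℕ} (B : Matrix (Fin n) (Fin n) ℝ) : ℝ :=
  sInf {r : ℝ | ∃ v : Fin n → ℤ, (∀ i, 0 ≤ v i) ∧ v ≠ 0 ∧ r = qf B (intCast v)}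

/-- The set of nonzero nonnegative integer vectors attaining the copositive minimum. -/
def MinCOP {n : ℕ} (B : Matrix (Fin n) (Fin n) ℝ) : Set (Fin n → ℤ) :=
  {v | (∀ i, 0 ≤ v i) ∧ v ≠ 0 ∧ qf B (intCast v) = copoMin B}

/-- `B` is perfect copositive: strictly copositive and uniquely determined among
symmetric matrices by the equations `vᵀQv = copoMin B` for `v ∈ MinCOP B`. -/
def IsPerfectCopositive {n : ℕ} (B : Matrix (Fin n) (Fin n) ℝ) : Prop :=
  B.IsSymm ∧ StrictlyCopositive B ∧
    ∀ Q : Matrix (Fin n) (Fin n) ℝ, Q.IsSymm →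
      (∀ v ∈ MinCOP B, qf Q (intCast v) = copoMin B) → Q = B

/-!
Strict copositivity and compactness of the standard simplex give `c > 0` with
`c * (∑ i, x i) ^ 2 ≤ xᵀBx` on the nonnegative orthant. Hence every vector of `Min_COP(B)`
has coordinate sum at most `√(min_COP(B) / c)`, and there are only finitely many
nonnegative integer vectors with bounded coordinates.
-/

lemma qf_smul {n : ℕ} (B : Matrix (Fin n) (Fin n) ℝ) (t : ℝ) (x : Fin n → ℝ) :
    qf B (t • x) = t ^ 2 * qf B x := by
  simp only [qf, mulVec_smul, smul_dotProduct, dotProduct_smul, smul_eq_mul]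
  ring

lemma continuous_qf {n : ℕ} (B : Matrix (Fin n) (Fin n) ℝ) : Continuous (qf B) :=
  continuous_id.dotProduct (continuous_const.matrix_mulVec continuous_id)

namespace StrictlyCopositive

variable {n : ℕ} {B : Matrix (Fin n) (Fin n) ℝ}

lemma qf_nonneg (hB : StrictlyCopositive B) {x : Fin n → ℝ} (hx : ∀ i, 0 ≤ x i) :
    0 ≤ qf B x := by
  rcases eq_or_ne x 0 with rfl | hx0
  · simp [qf]
  · exact (hB x hx hx0).le

lemma exists_pos_mul_sq_sum_le_qf (hB : StrictlyCopositive B) :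
    ∃ c > 0, ∀ x : Fin n → ℝ, (∀ i, 0 ≤ x i) → c * (∑ i, x i) ^ 2 ≤ qf B x := by
  have hpos : ∀ x ∈ stdSimplex ℝ (Fin n), 0 < qf B x := fun x hx =>
    hB x hx.1 fun h => by simpa [h] using hx.2
  obtain ⟨c, hc, hcle⟩ :=
    (isCompact_stdSimplex ℝ (Fin n)).exists_forall_le' (continuous_qf B).continuousOn hpos
  refine ⟨c, hc, fun x hx => ?_⟩
  have ht0 : 0 ≤ ∑ i, x i := Finset.sum_nonneg fun i _ => hx i
  set t := ∑ i, x i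
  rcases ht0.eq_or_lt with ht | ht
  · rw [← ht]
    simpa using hB.qf_nonneg hx
  have hxt : t⁻¹ • x ∈ stdSimplex ℝ (Fin n) := by
    refine ⟨fun i => smul_nonneg (inv_nonneg.2 ht.le) (hx i), ?_⟩
    simp only [Pi.smul_apply, smul_eq_mul, ← Finset.mul_sum]
    exact inv_mul_cancel₀ ht.ne'
  calc c * t ^ 2 ≤ qf B (t⁻¹ • x) * t ^ 2 := by gcongr; exact hcle _ hxt
    _ = qf B x := by rw [qf_smul]; field_simp

lemma finite_setOf_nonneg_qf_le (hB : StrictlyCopositive B) (R : ℝ) :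
    {v : Fin n → ℤ | (∀ i, 0 ≤ v i) ∧ qf B (intCast v) ≤ R}.Finite := by
  obtain ⟨c, hc, hcle⟩ := hB.exists_pos_mul_sq_sum_le_qf
  refine (Set.finite_Icc (0 : Fin n → ℤ) (fun _ => ⌈R / c⌉)).subset ?_
  rintro v ⟨hv, hvR⟩
  refine ⟨hv, fun i => ?_⟩
  have hv' : ∀ j, (0 : ℝ) ≤ intCast v j := fun j => Int.cast_nonneg (hv j)
  have hvi : (v i : ℝ) ≤ (∑ j, intCast v j) ^ 2 := calc
    (v i : ℝ) ≤ (v i : ℝ) ^ 2 := by exact_mod_cast Int.le_self_sq (v i)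
    _ ≤ (∑ j, intCast v j) ^ 2 := by
      gcongr
      · exact hv' i
      · exact Finset.single_le_sum (fun j _ => hv' j) (Finset.mem_univ i)
  have hsum : (∑ j, intCast v j) ^ 2 ≤ R / c := by
    rw [le_div_iff₀ hc, mul_comm]
    exact (hcle _ hv').trans hvR
  exact Int.cast_le.1 ((hvi.trans hsum).trans (Int.le_ceil _))

end StrictlyCopositive

theorem minCOP_finite_general {n : ℕ} (B : Matrix (Fin n) (Fin n) ℝ)
    (hsc : StrictlyCopositive B) : (MinCOP B).Finite :=
  (hsc.finite_setOf_nonneg_qf_le (copoMin B)).subset fun _ ⟨hv, _, hvmin⟩ => ⟨hv, hvmin.le⟩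

theorem minCOP_finite {n : ℕ} (hn : 0 < n) (B : Matrix (Fin n) (Fin n) ℝ)
    (hB : B.IsSymm) (hsc : StrictlyCopositive B) : (MinCOP B).Finite :=
  minCOP_finite_general B hsc
end

section
/- If n ≥ 2, then no symmetric n×n matrix P with all entries nonnegative is perfect copositive, where a strictly copositive matrix P is perfect copositive if it is the unique symmetric matrix Q satisfying Q[v] = min_COP(P) for all v ∈ Min_COP(P). -/
open Matrix

lemma qf_std {n : ℕ} (a b : Fin n) (x : Fin n → ℝ) :
    qf (Matrix.single a b (1:ℝ)) x = x a * x b := by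
  simp [qf, Matrix.mulVec, dotProduct, Matrix.single, ite_and, Finset.mul_sum,
    Finset.sum_ite_eq, Finset.sum_ite_eq']

lemma qf_add {n : ℕ} (A B : Matrix (Fin n) (Fin n) ℝ) (x : Fin n → ℝ) :
    qf (A + B) x = qf A x + qf B x := by
  simp [qf, Matrix.add_mulVec, dotProduct_add]

lemma qf_single {n : ℕ} (A : Matrix (Fin n) (Fin n) ℝ) (a : Fin n) :
    qf A (Pi.single a 1) = A a a := by
  simp [qf, Matrix.mulVec_single]

lemma qf_expand {n : ℕ} (A : Matrix (Fin n) (Fin n) ℝ) (x : Fin n → ℝ) :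
    qf A x = ∑ i, ∑ j, x i * (A i j * x j) := by
  simp [qf, Matrix.mulVec, dotProduct, Finset.mul_sum]

theorem nonneg_not_perfectCopositive {n : ℕ} (hn : 2 ≤ n)
    (P : Matrix (Fin n) (Fin n) ℝ) (hP : P.IsSymm) (hnn : ∀ i j, 0 ≤ P i j) :
    ¬ IsPerfectCopositive P := by
  rintro ⟨hsym, hsc, huniq⟩
  set i0 : Fin n := ⟨0, by omega⟩ with hi0
  set i1 : Fin n := ⟨1, by omega⟩ with hi1
  have hne : i0 ≠ i1 := by simp [hi0, hi1, Fin.ext_iff]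
  -- the single-entry vector e0
  set e0 : Fin n → ℤ := Pi.single i0 1 with he0
  have he0cast : intCast e0 = Pi.single i0 (1:ℝ) := by
    ext j
    by_cases h : j = i0 <;> simp [intCast, he0, h, Pi.single_apply]
  have he0qf : qf P (intCast e0) = P i0 i0 := by rw [he0cast, qf_single]
  -- nonnegativity of qf on nonnegative vectors
  have hqf_nonneg : ∀ x : Fin n → ℝ, (∀ i, 0 ≤ x i) → 0 ≤ qf P x := by
    intro x hx
    rw [qf_expand]
    apply Finset.sum_nonneg; intro i _
    apply Finset.sum_nonneg; intro j _
    exact mul_nonneg (hx i) (mul_nonneg (hnn i j) (hx j))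
  -- copoMin P ≤ P i0 i0
  have hbdd : BddBelow {r : ℝ | ∃ v : Fin n → ℤ, (∀ i, 0 ≤ v i) ∧ v ≠ 0 ∧ r = qf P (intCast v)} := by
    refine ⟨0, ?_⟩
    rintro r ⟨v, hv, -, rfl⟩
    exact hqf_nonneg _ (fun i => by show (0:ℝ) ≤ (v i : ℝ); exact_mod_cast hv i)
  have hmem : P i0 i0 ∈ {r : ℝ | ∃ v : Fin n → ℤ, (∀ i, 0 ≤ v i) ∧ v ≠ 0 ∧ r = qf P (intCast v)} := by
    refine ⟨e0, fun i => ?_, ?_, he0qf.symm⟩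
    · by_cases h : i = i0 <;> simp [he0, h, Pi.single_apply]
    · intro h
      have := congrFun h i0
      simp [he0] at this
  have hle : copoMin P ≤ P i0 i0 := csInf_le hbdd hmem
  -- P i1 i1 > 0
  have hP11 : 0 < P i1 i1 := by
    have := hsc (Pi.single i1 1) (fun i => by
        by_cases h : i = i1 <;> simp [h, Pi.single_apply])
      (by
        intro h
        have := congrFun h i1
        simp at this)
    rwa [qf_single] at this
  -- every minimizer v has v i0 * v i1 = 0
  have hkey : ∀ v ∈ MinCOP P, (intCast v) i0 * (intCast v) i1 = 0 := by
    rintro v ⟨hv, hv0, hvmin⟩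
    by_contra hcon
    have h0 : 1 ≤ v i0 := by
      rcases lt_or_eq_of_le (hv i0) with h | h
      · omega
      · exfalso; apply hcon; simp [intCast, ← h]
    have h1 : 1 ≤ v i1 := by
      rcases lt_or_eq_of_le (hv i1) with h | h
      · omega
      · exfalso; apply hcon; simp [intCast, ← h]
    set x : Fin n → ℝ := intCast v with hx
    have hxnn : ∀ i, 0 ≤ x i := fun i => by show (0:ℝ) ≤ (v i : ℝ); exact_mod_cast hv i
    have hx0 : (1:ℝ) ≤ x i0 := by show (1:ℝ) ≤ (v i0 : ℝ); exact_mod_cast h0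
    have hx1 : (1:ℝ) ≤ x i1 := by show (1:ℝ) ≤ (v i1 : ℝ); exact_mod_cast h1
    -- qf P x ≥ P i0 i0 + P i1 i1
    have hstep1 : ∀ i : Fin n, x i * (P i i * x i) ≤ ∑ j, x i * (P i j * x j) := by
      intro i
      exact Finset.single_le_sum (f := fun j => x i * (P i j * x j))
        (fun j _ => mul_nonneg (hxnn i) (mul_nonneg (hnn i j) (hxnn j))) (Finset.mem_univ i)
    have hstep2 : ∑ i ∈ ({i0, i1} : Finset (Fin n)), x i * (P i i * x i) ≤ qf P x := by
      rw [qf_expand]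
      refine le_trans (Finset.sum_le_sum_of_subset_of_nonneg (Finset.subset_univ _)
        (fun i _ _ => mul_nonneg (hxnn i) (mul_nonneg (hnn i i) (hxnn i)))) ?_
      exact Finset.sum_le_sum (fun i _ => hstep1 i)
    rw [Finset.sum_pair hne] at hstep2
    have hsq0 : (1:ℝ) ≤ x i0 * x i0 := by nlinarith
    have hsq1 : (1:ℝ) ≤ x i1 * x i1 := by nlinarith
    have hb0 : P i0 i0 ≤ x i0 * (P i0 i0 * x i0) := by
      nlinarith [mul_le_mul_of_nonneg_left hsq0 (hnn i0 i0)]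
    have hb1 : P i1 i1 ≤ x i1 * (P i1 i1 * x i1) := by
      nlinarith [mul_le_mul_of_nonneg_left hsq1 (hnn i1 i1)]
    have : P i0 i0 + P i1 i1 ≤ qf P x := by linarith
    rw [hvmin] at this
    linarith
  -- the perturbed matrix
  set D : Matrix (Fin n) (Fin n) ℝ := Matrix.single i0 i1 1 + Matrix.single i1 i0 1 with hD
  have hDsymm : D.IsSymm := by
    ext i j
    by_cases h1 : i = i0 ∧ j = i1
    · simp [hD, Matrix.transpose_apply, h1.1, h1.2, Matrix.single_apply_same,
        Matrix.single_apply_of_ne, hne, hne.symm]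
    · by_cases h2 : i = i1 ∧ j = i0
      · simp [hD, Matrix.transpose_apply, h2.1, h2.2, Matrix.single_apply_same,
          Matrix.single_apply_of_ne, hne, hne.symm]
      · have e1 : ¬ (i0 = j ∧ i1 = i) := by tauto
        have e2 : ¬ (i1 = j ∧ i0 = i) := by tauto
        have e3 : ¬ (i0 = i ∧ i1 = j) := by tauto
        have e4 : ¬ (i1 = i ∧ i0 = j) := by tauto
        simp [hD, Matrix.transpose_apply, Matrix.single_apply_of_ne, e1, e2, e3, e4]
  have hQsymm : (P + D).IsSymm := by
    rw [Matrix.IsSymm, Matrix.transpose_add, hsym, hDsymm]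
  have hQmin : ∀ v ∈ MinCOP P, qf (P + D) (intCast v) = copoMin P := by
    intro v hv
    rw [qf_add, hD, qf_add, qf_std, qf_std]
    have h := hkey v hv
    have := hv.2.2
    rw [this]
    rw [mul_comm ((intCast v) i1)]
    rw [h]
    ring
  have : P + D = P := huniq (P + D) hQsymm hQmin
  have h01 : (P + D) i0 i1 = P i0 i1 + 1 := by
    have ha : Matrix.single i1 i0 (1:ℝ) i0 i1 = 0 :=
      Matrix.single_apply_of_ne _ _ _ _ _ (fun h => hne h.1.symm)
    simp [hD, Matrix.add_apply, Matrix.single_apply_same, ha]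
  rw [this] at h01
  linarith
end

section
/- The copositive minimum of the matrix Q_{A_n} (with 2's on the diagonal, -1 on the first off-diagonals, and 0 elsewhere) equals 2, and Min_COP(Q_{A_n}) = { Σ_{i=j}^{k} e_i : 1 ≤ j ≤ k ≤ n }, the set of 0/1 vectors with a consecutive block of ones. -/
open Matrix

/-- The Gram matrix of the root lattice `A_n`: tridiagonal with 2's on the diagonal
and -1 on the first off-diagonals. -/
def QA (n : ℕ) : Matrix (Fin n) (Fin n) ℝ :=
  fun i j => if i = j then 2 else if (i : ℕ) + 1 = (j : ℕ) ∨ (j : ℕ) + 1 = (i : ℕ) then -1 else 0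

def pad {R : Type*} [CommRing R] {n : ℕ} (x : Fin n → R) : ℕ → R :=
  fun i => if h : i < n then x ⟨i, h⟩ else 0

def dd {R : Type*} [CommRing R] {n : ℕ} (x : Fin n → R) : ℕ → R :=
  fun i => pad x i - if i = 0 then 0 else pad x (i - 1)

lemma innerQA {n : ℕ} (x : Fin n → ℝ) (i : Fin n) :
    ∑ j, QA n i j * x j
      = 2 * pad x (i : ℕ) - pad x ((i : ℕ) + 1)
        - (if (i : ℕ) = 0 then 0 else pad x ((i : ℕ) - 1)) := by
  have h1 : ∀ j : Fin n, QA n i j * x j =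
      (fun jj : ℕ => 2 * (if jj = (i : ℕ) then pad x jj else 0)
      - (if jj = (i : ℕ) + 1 then pad x jj else 0)
      - (if (i : ℕ) ≠ 0 ∧ jj = (i : ℕ) - 1 then pad x jj else 0)) (j : ℕ) := by
    intro j
    have hj : pad x (j : ℕ) = x j := by simp [pad]
    simp only [hj]
    simp only [QA, Fin.ext_iff]
    split_ifs <;> first | omega | ring
  calc ∑ j : Fin n, QA n i j * x j
      = ∑ j : Fin n, (fun jj : ℕ => 2 * (if jj = (i : ℕ) then pad x jj else 0)
          - (if jj = (i : ℕ) + 1 then pad x jj else 0)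
          - (if (i : ℕ) ≠ 0 ∧ jj = (i : ℕ) - 1 then pad x jj else 0)) (j : ℕ) :=
        Finset.sum_congr rfl (fun j _ => h1 j)
    _ = ∑ jj ∈ Finset.range n, (2 * (if jj = (i : ℕ) then pad x jj else 0)
          - (if jj = (i : ℕ) + 1 then pad x jj else 0)
          - (if (i : ℕ) ≠ 0 ∧ jj = (i : ℕ) - 1 then pad x jj else 0)) :=
        Fin.sum_univ_eq_sum_range (fun jj : ℕ => 2 * (if jj = (i : ℕ) then pad x jj else 0)
          - (if jj = (i : ℕ) + 1 then pad x jj else 0)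
          - (if (i : ℕ) ≠ 0 ∧ jj = (i : ℕ) - 1 then pad x jj else 0)) n
    _ = 2 * pad x (i : ℕ) - pad x ((i : ℕ) + 1)
        - (if (i : ℕ) = 0 then 0 else pad x ((i : ℕ) - 1)) := by
        rw [Finset.sum_sub_distrib, Finset.sum_sub_distrib, ← Finset.mul_sum]
        rw [Finset.sum_ite_eq', Finset.sum_ite_eq']
        have e1 : (if (i : ℕ) ∈ Finset.range n then pad x (i : ℕ) else 0) = pad x (i : ℕ) := by
          simp [i.isLt]
        have e2 : (if (i : ℕ) + 1 ∈ Finset.range n then pad x ((i : ℕ) + 1) else 0)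
            = pad x ((i : ℕ) + 1) := by
          split
          · rfl
          · rename_i h; simp only [Finset.mem_range] at h
            simp only [pad]; rw [dif_neg (by omega)]
        rw [e1, e2]
        congr 1
        by_cases hi : (i : ℕ) = 0
        · simp [hi]
        · simp only [hi, ne_eq, not_false_iff, true_and, if_false]
          rw [Finset.sum_ite_eq', if_pos]
          simp only [Finset.mem_range]
          omega

lemma qf_QA_eq {n : ℕ} (hn : 0 < n) (x : Fin n → ℝ) :
    qf (QA n) x = ∑ i ∈ Finset.range (n + 1), (dd x i) ^ 2 := by
  obtain ⟨m, rfl⟩ : ∃ m, n = m + 1 := ⟨n - 1, by omega⟩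
  have hpadtop : pad x (m + 1) = 0 := by simp [pad]
  -- LHS
  have hL : qf (QA (m + 1)) x
      = ∑ i ∈ Finset.range (m + 1), pad x i * (2 * pad x i - pad x (i + 1)
          - (if i = 0 then 0 else pad x (i - 1))) := by
    have : qf (QA (m + 1)) x = ∑ i : Fin (m + 1), x i * ∑ j, QA (m + 1) i j * x j := by
      simp [qf, dotProduct, Matrix.mulVec]
    rw [this]
    have h2 : ∀ i : Fin (m + 1), x i * ∑ j, QA (m + 1) i j * x j
        = (fun ii : ℕ => pad x ii * (2 * pad x ii - pad x (ii + 1)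
            - (if ii = 0 then 0 else pad x (ii - 1)))) (i : ℕ) := by
      intro i
      rw [innerQA]
      have hi : pad x (i : ℕ) = x i := by unfold pad; rw [dif_pos i.isLt]
      rw [← hi]
    calc ∑ i : Fin (m + 1), x i * ∑ j, QA (m + 1) i j * x j
        = ∑ i : Fin (m + 1), (fun ii : ℕ => pad x ii * (2 * pad x ii - pad x (ii + 1)
            - (if ii = 0 then 0 else pad x (ii - 1)))) (i : ℕ) :=
          Finset.sum_congr rfl (fun i _ => h2 i)
      _ = _ := Fin.sum_univ_eq_sum_range (fun ii : ℕ => pad x ii * (2 * pad x ii - pad x (ii + 1)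
            - (if ii = 0 then 0 else pad x (ii - 1)))) (m + 1)
  rw [hL]
  -- expand both sides
  have expand : ∀ i : ℕ, pad x i * (2 * pad x i - pad x (i + 1)
      - (if i = 0 then 0 else pad x (i - 1)))
      = 2 * (pad x i) ^ 2 - pad x i * pad x (i + 1)
        - (if i = 0 then 0 else pad x i * pad x (i - 1)) := by
    intro i; split_ifs <;> ring
  rw [Finset.sum_congr rfl (fun i _ => expand i)]
  rw [Finset.sum_sub_distrib, Finset.sum_sub_distrib]
  -- third term reindex
  have h3 : ∑ i ∈ Finset.range (m + 1), (if i = 0 then 0 else pad x i * pad x (i - 1))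
      = ∑ i ∈ Finset.range m, pad x (i + 1) * pad x i := by
    rw [Finset.sum_range_succ']
    simp
  -- second term: cut last
  have h4 : ∑ i ∈ Finset.range (m + 1), pad x i * pad x (i + 1)
      = ∑ i ∈ Finset.range m, pad x i * pad x (i + 1) := by
    rw [Finset.sum_range_succ, hpadtop, mul_zero, add_zero]
  -- RHS
  have hR : ∑ i ∈ Finset.range (m + 1 + 1), (dd x i) ^ 2
      = (∑ i ∈ Finset.range (m + 1), (pad x i) ^ 2)
        + (∑ i ∈ Finset.range (m + 1), (pad x i) ^ 2)
        - 2 * ∑ i ∈ Finset.range (m + 1), pad x (i + 1) * pad x i := by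
    have hdd : ∀ i : ℕ, (dd x i) ^ 2
        = (pad x i) ^ 2 + (if i = 0 then 0 else pad x (i - 1)) ^ 2
          - 2 * (pad x i * (if i = 0 then 0 else pad x (i - 1))) := by
      intro i; simp only [dd]; ring
    rw [Finset.sum_congr rfl (fun i _ => hdd i)]
    rw [Finset.sum_sub_distrib, Finset.sum_add_distrib, ← Finset.mul_sum]
    congr 1
    · congr 1
      · rw [Finset.sum_range_succ, hpadtop]; norm_num
      · rw [Finset.sum_range_succ']
        simp
    · congr 1
      rw [Finset.sum_range_succ']
      simp
  rw [hR]
  have h5 : ∑ i ∈ Finset.range (m + 1), pad x (i + 1) * pad x i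
      = ∑ i ∈ Finset.range m, pad x (i + 1) * pad x i := by
    rw [Finset.sum_range_succ, hpadtop, zero_mul, add_zero]
  have h6 : ∑ i ∈ Finset.range m, pad x i * pad x (i + 1)
      = ∑ i ∈ Finset.range m, pad x (i + 1) * pad x i :=
    Finset.sum_congr rfl (fun i _ => mul_comm _ _)
  rw [h3, h4, h5, h6]
  have h7 : ∑ i ∈ Finset.range (m + 1), 2 * pad x i ^ 2
      = 2 * ∑ i ∈ Finset.range (m + 1), pad x i ^ 2 := (Finset.mul_sum _ _ _).symm
  rw [h7]
  ring

lemma pad_cast {n : ℕ} (v : Fin n → ℤ) (i : ℕ) :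
    pad (intCast v) i = ((pad v i : ℤ) : ℝ) := by
  simp only [pad, intCast]
  split <;> simp

lemma dd_cast {n : ℕ} (v : Fin n → ℤ) (i : ℕ) :
    dd (intCast v) i = ((dd v i : ℤ) : ℝ) := by
  simp only [dd, pad_cast]
  split <;> push_cast <;> ring

lemma qf_cast {n : ℕ} (hn : 0 < n) (v : Fin n → ℤ) :
    qf (QA n) (intCast v) = ((∑ i ∈ Finset.range (n + 1), (dd v i) ^ 2 : ℤ) : ℝ) := by
  rw [qf_QA_eq hn]
  push_cast
  exact Finset.sum_congr rfl fun i _ => by rw [dd_cast]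

lemma psum {n : ℕ} (v : Fin n → ℤ) : ∀ i : ℕ, ∑ j ∈ Finset.range (i + 1), dd v j = pad v i := by
  intro i
  induction i with
  | zero => simp [dd]
  | succ k ih =>
      rw [Finset.sum_range_succ, ih]
      simp only [dd]
      have : k + 1 - 1 = k := rfl
      rw [this]
      simp

lemma abs_le_sq (a : ℤ) : |a| ≤ a ^ 2 := by
  rcases eq_or_ne a 0 with h | h
  · simp [h]
  · have h1 : 1 ≤ |a| := Int.one_le_abs h
    calc |a| = |a| * 1 := (mul_one _).symm
      _ ≤ |a| * |a| := by nlinarith [abs_nonneg a]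
      _ = a ^ 2 := by rw [← abs_mul, abs_mul_self a, sq]

lemma abs_eq_two_max (a : ℤ) : |a| = 2 * max a 0 - a := by
  rcases le_total 0 a with h | h
  · rw [abs_of_nonneg h, max_eq_left h]; ring
  · rw [abs_of_nonpos h, max_eq_right h]; ring

lemma neg_max_eq (a : ℤ) : max (-a) 0 = max a 0 - a := by
  rcases le_total 0 a with h | h
  · rw [max_eq_left h, max_eq_right (by omega : -a ≤ 0)]; ring
  · rw [max_eq_right h, max_eq_left (by omega : 0 ≤ -a)]; ring

lemma dd_total {n : ℕ} (v : Fin n → ℤ) : ∑ i ∈ Finset.range (n + 1), dd v i = 0 := by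
  rw [psum v n]
  simp [pad]

lemma P_ge_one {n : ℕ} (v : Fin n → ℤ) (hv : ∀ i, 0 ≤ v i) (hne : v ≠ 0) :
    1 ≤ ∑ i ∈ Finset.range (n + 1), max (dd v i) 0 := by
  obtain ⟨i0, hi0⟩ : ∃ i, v i ≠ 0 := Function.ne_iff.mp hne
  have h1 : 1 ≤ v i0 := lt_of_le_of_ne (hv i0) (Ne.symm hi0)
  have hp : pad v (i0 : ℕ) = v i0 := by simp [pad]
  calc (1 : ℤ) ≤ v i0 := h1
    _ = ∑ j ∈ Finset.range ((i0 : ℕ) + 1), dd v j := by rw [psum v (i0 : ℕ), hp]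
    _ ≤ ∑ j ∈ Finset.range ((i0 : ℕ) + 1), max (dd v j) 0 :=
        Finset.sum_le_sum fun j _ => le_max_left _ _
    _ ≤ ∑ i ∈ Finset.range (n + 1), max (dd v i) 0 :=
        Finset.sum_le_sum_of_subset_of_nonneg
          (Finset.range_subset_range.mpr (by have := i0.isLt; omega))
          (fun j _ _ => le_max_right _ 0)

lemma abs_sum_eq {n : ℕ} (v : Fin n → ℤ) :
    ∑ i ∈ Finset.range (n + 1), |dd v i|
      = 2 * ∑ i ∈ Finset.range (n + 1), max (dd v i) 0 := by
  have := dd_total v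
  calc ∑ i ∈ Finset.range (n + 1), |dd v i|
      = ∑ i ∈ Finset.range (n + 1), (2 * max (dd v i) 0 - dd v i) :=
        Finset.sum_congr rfl fun i _ => abs_eq_two_max _
    _ = 2 * ∑ i ∈ Finset.range (n + 1), max (dd v i) 0 := by
        rw [Finset.sum_sub_distrib, ← Finset.mul_sum, this, sub_zero]

lemma sum_sq_lb {n : ℕ} (v : Fin n → ℤ) (hv : ∀ i, 0 ≤ v i) (hne : v ≠ 0) :
    2 ≤ ∑ i ∈ Finset.range (n + 1), (dd v i) ^ 2 := by
  have h1 := P_ge_one v hv hne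
  calc (2 : ℤ) ≤ 2 * ∑ i ∈ Finset.range (n + 1), max (dd v i) 0 := by omega
    _ = ∑ i ∈ Finset.range (n + 1), |dd v i| := (abs_sum_eq v).symm
    _ ≤ ∑ i ∈ Finset.range (n + 1), (dd v i) ^ 2 :=
        Finset.sum_le_sum fun i _ => abs_le_sq _

lemma eq_two_struct {n : ℕ} (v : Fin n → ℤ) (hv : ∀ i, 0 ≤ v i) (hne : v ≠ 0)
    (h2 : ∑ i ∈ Finset.range (n + 1), (dd v i) ^ 2 = 2) :
    ∃ j k : Fin n, j ≤ k ∧ v = fun i => if j ≤ i ∧ i ≤ k then 1 else 0 := by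
  have hP1 := P_ge_one v hv hne
  have habs2 : ∑ i ∈ Finset.range (n + 1), |dd v i| = 2 := by
    have hle : ∑ i ∈ Finset.range (n + 1), |dd v i| ≤ 2 :=
      h2 ▸ Finset.sum_le_sum fun i _ => abs_le_sq _
    have hge : 2 ≤ ∑ i ∈ Finset.range (n + 1), |dd v i| := by rw [abs_sum_eq v]; omega
    omega
  have hPeq : ∑ i ∈ Finset.range (n + 1), max (dd v i) 0 = 1 := by
    have := abs_sum_eq v
    omega
  have hptw : ∀ i ∈ Finset.range (n + 1), (dd v i) ^ 2 = |dd v i| := by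
    have h0 : ∑ i ∈ Finset.range (n + 1), ((dd v i) ^ 2 - |dd v i|) = 0 := by
      rw [Finset.sum_sub_distrib, h2, habs2, sub_self]
    intro i hi
    have := (Finset.sum_eq_zero_iff_of_nonneg
      (fun i _ => sub_nonneg.mpr (abs_le_sq (dd v i)))).mp h0 i hi
    omega
  have hsmall : ∀ i ∈ Finset.range (n + 1), -1 ≤ dd v i ∧ dd v i ≤ 1 := by
    intro i hi
    have h := hptw i hi
    have hs : |dd v i| ^ 2 = |dd v i| := by rw [sq_abs]; exact h
    have h1 : |dd v i| ≤ 1 := by nlinarith [abs_nonneg (dd v i), sq_nonneg (|dd v i| - 1)]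
    exact abs_le.mp h1
  -- the positive index a
  obtain ⟨a, haS, ha⟩ : ∃ a ∈ Finset.range (n + 1), max (dd v a) 0 ≠ 0 := by
    by_contra h
    push_neg at h
    rw [Finset.sum_eq_zero h] at hPeq
    omega
  have hda : dd v a = 1 := by
    have h1 : 0 < dd v a := by
      rcases le_or_gt (dd v a) 0 with h | h
      · exact absurd (max_eq_right h) ha
      · exact h
    have := (hsmall a haS).2
    omega
  have hrest_nonpos : ∀ i ∈ Finset.range (n + 1), i ≠ a → dd v i ≤ 0 := by
    have h' : ∑ i ∈ (Finset.range (n + 1)).erase a, max (dd v i) 0 + max (dd v a) 0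
        = ∑ i ∈ Finset.range (n + 1), max (dd v i) 0 :=
      Finset.sum_erase_add _ _ haS
    rw [hda] at h'
    have hm1 : max (1 : ℤ) 0 = 1 := by norm_num
    rw [hm1, hPeq] at h'
    have he : ∑ i ∈ (Finset.range (n + 1)).erase a, max (dd v i) 0 = 0 := by omega
    intro i hi hia
    have := (Finset.sum_eq_zero_iff_of_nonneg
      (fun i _ => le_max_right (dd v i) 0)).mp he i (Finset.mem_erase.mpr ⟨hia, hi⟩)
    omega
  -- the negative index b
  have hNeq : ∑ i ∈ Finset.range (n + 1), max (-dd v i) 0 = 1 := by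
    have heq : ∑ i ∈ Finset.range (n + 1), max (-dd v i) 0
        = ∑ i ∈ Finset.range (n + 1), (max (dd v i) 0 - dd v i) :=
      Finset.sum_congr rfl fun i _ => neg_max_eq _
    rw [heq, Finset.sum_sub_distrib, hPeq, dd_total v, sub_zero]
  obtain ⟨b, hbS, hb⟩ : ∃ b ∈ Finset.range (n + 1), max (-dd v b) 0 ≠ 0 := by
    by_contra h
    push_neg at h
    rw [Finset.sum_eq_zero h] at hNeq
    omega
  have hdb : dd v b = -1 := by
    have h1 : dd v b < 0 := by
      rcases le_or_gt 0 (dd v b) with h | h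
      · exact absurd (max_eq_right (by omega : -dd v b ≤ 0)) hb
      · exact h
    have := (hsmall b hbS).1
    omega
  have hrest_nonneg : ∀ i ∈ Finset.range (n + 1), i ≠ b → 0 ≤ dd v i := by
    have h' : ∑ i ∈ (Finset.range (n + 1)).erase b, max (-dd v i) 0 + max (-dd v b) 0
        = ∑ i ∈ Finset.range (n + 1), max (-dd v i) 0 :=
      Finset.sum_erase_add _ _ hbS
    rw [hdb] at h'
    have hm1 : max (-(-1) : ℤ) 0 = 1 := by norm_num
    rw [hm1, hNeq] at h'
    have he : ∑ i ∈ (Finset.range (n + 1)).erase b, max (-dd v i) 0 = 0 := by omega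
    intro i hi hib
    have := (Finset.sum_eq_zero_iff_of_nonneg
      (fun i _ => le_max_right (-dd v i) 0)).mp he i (Finset.mem_erase.mpr ⟨hib, hi⟩)
    omega
  have hab : a ≠ b := fun h => by rw [h, hdb] at hda; omega
  -- explicit formula for dd
  have hform : ∀ i ∈ Finset.range (n + 1),
      dd v i = (if i = a then 1 else 0) - (if i = b then (1 : ℤ) else 0) := by
    intro i hi
    rcases eq_or_ne i a with rfl | hia
    · simp [hab, hda]
    · rcases eq_or_ne i b with rfl | hib
      · simp [hia, hdb]
      · have h1 := hrest_nonpos i hi hia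
        have h2 := hrest_nonneg i hi hib
        simp only [hia, hib, if_false]
        omega
  have haS' : a < n + 1 := Finset.mem_range.mp haS
  have hbS' : b < n + 1 := Finset.mem_range.mp hbS
  -- explicit formula for pad
  have hw : ∀ m : ℕ, m ≤ n →
      pad v m = (if a ≤ m then 1 else 0) - (if b ≤ m then (1 : ℤ) else 0) := by
    intro m hm
    rw [← psum v m]
    have hsub : ∀ j ∈ Finset.range (m + 1),
        dd v j = (if j = a then 1 else 0) - (if j = b then (1 : ℤ) else 0) := by
      intro j hj
      exact hform j (Finset.mem_range.mpr (by have := Finset.mem_range.mp hj; omega))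
    rw [Finset.sum_congr rfl hsub, Finset.sum_sub_distrib,
      Finset.sum_ite_eq', Finset.sum_ite_eq']
    simp [Finset.mem_range, Nat.lt_succ_iff]
  -- a < b
  have haltb : a < b := by
    rcases lt_or_gt_of_ne hab with h | h
    · exact h
    · exfalso
      have hbn : b < n := by omega
      have h1 := hw b (by omega)
      have h2 : pad v b = v ⟨b, hbn⟩ := by simp [pad, hbn]
      have h3 := hv ⟨b, hbn⟩
      rw [h2, if_neg (by omega), if_pos (le_refl b)] at h1
      omega
  have han : a < n := by omega
  refine ⟨⟨a, han⟩, ⟨b - 1, by omega⟩, by simp [Fin.le_def]; omega, ?_⟩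
  funext i
  have hvi : v i = pad v (i : ℕ) := by simp [pad]
  rw [hvi, hw (i : ℕ) (by have := i.isLt; omega)]
  simp only [Fin.le_def]
  split_ifs <;> omega

lemma block_val {n : ℕ} (j k : Fin n) (hjk : j ≤ k) :
    ∑ i ∈ Finset.range (n + 1),
      (dd (fun i : Fin n => if j ≤ i ∧ i ≤ k then (1 : ℤ) else 0) i) ^ 2 = 2 := by
  have hjk' : (j : ℕ) ≤ (k : ℕ) := hjk
  have hjn : (j : ℕ) < n := j.isLt
  have hkn : (k : ℕ) < n := k.isLt
  have hd : ∀ i : ℕ, dd (fun i : Fin n => if j ≤ i ∧ i ≤ k then (1 : ℤ) else 0) i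
      = (if i = (j : ℕ) then 1 else 0) - (if i = (k : ℕ) + 1 then (1 : ℤ) else 0) := by
    intro i
    simp only [dd, pad, Fin.le_def]
    split_ifs <;> omega
  have hsq : ∀ i ∈ Finset.range (n + 1),
      (dd (fun i : Fin n => if j ≤ i ∧ i ≤ k then (1 : ℤ) else 0) i) ^ 2
      = (if i = (j : ℕ) then 1 else 0) + (if i = (k : ℕ) + 1 then (1 : ℤ) else 0) := by
    intro i _
    rw [hd i]
    split_ifs <;> omega
  rw [Finset.sum_congr rfl hsq, Finset.sum_add_distrib,
    Finset.sum_ite_eq', Finset.sum_ite_eq']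
  rw [if_pos (Finset.mem_range.mpr (by omega)), if_pos (Finset.mem_range.mpr (by omega))]
  norm_num


theorem copoMin_QA {n : ℕ} (hn : 0 < n) :
    copoMin (QA n) = 2 ∧
    MinCOP (QA n) =
      {v | ∃ j k : Fin n, j ≤ k ∧ v = fun i => if j ≤ i ∧ i ≤ k then 1 else 0} := by
  unfold MinCOP copoMin
  set T := {r : ℝ | ∃ v : Fin n → ℤ, (∀ i, 0 ≤ v i) ∧ v ≠ 0 ∧ r = qf (QA n) (intCast v)} with hT
  have hblock_nonneg : ∀ j k : Fin n,
      ∀ i, 0 ≤ (fun i : Fin n => if j ≤ i ∧ i ≤ k then (1 : ℤ) else 0) i := by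
    intro j k i
    dsimp only
    split_ifs <;> omega
  have hblock_ne : ∀ j k : Fin n, j ≤ k →
      (fun i : Fin n => if j ≤ i ∧ i ≤ k then (1 : ℤ) else 0) ≠ 0 := by
    intro j k hjk h
    have := congrFun h j
    simp only [le_refl, hjk, and_self, if_true, Pi.zero_apply] at this
    exact one_ne_zero this
  have hblock_qf : ∀ j k : Fin n, j ≤ k →
      qf (QA n) (intCast (fun i : Fin n => if j ≤ i ∧ i ≤ k then (1 : ℤ) else 0)) = 2 := by
    intro j k hjk
    rw [qf_cast hn, block_val j k hjk]
    norm_num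
  have hlb : ∀ r ∈ T, 2 ≤ r := by
    rintro r ⟨v, hv, hne, rfl⟩
    rw [qf_cast hn]
    exact_mod_cast sum_sq_lb v hv hne
  have hmem : (2 : ℝ) ∈ T := by
    refine ⟨fun i : Fin n => if (⟨0, hn⟩ : Fin n) ≤ i ∧ i ≤ ⟨0, hn⟩ then 1 else 0,
      hblock_nonneg _ _, hblock_ne _ _ (le_refl _), ?_⟩
    rw [hblock_qf _ _ (le_refl _)]
  have hcop : sInf T = 2 :=
    le_antisymm (csInf_le ⟨2, hlb⟩ hmem) (le_csInf ⟨2, hmem⟩ hlb)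
  refine ⟨hcop, ?_⟩
  ext v
  constructor
  · rintro ⟨hv, hne, heq⟩
    rw [hcop] at heq
    have h2 : ∑ i ∈ Finset.range (n + 1), (dd v i) ^ 2 = 2 := by
      rw [qf_cast hn] at heq
      exact_mod_cast heq
    exact eq_two_struct v hv hne h2
  · rintro ⟨j, k, hjk, rfl⟩
    exact ⟨hblock_nonneg j k, hblock_ne j k hjk, by rw [hblock_qf j k hjk, hcop]⟩
end

section
/- Let n = 2 and suppose P is a perfect copositive 2×2 matrix. Then P is positive definite and its off-diagonal entry is negative; conversely, every classically perfect positive definite 2×2 matrix with negative off-diagonal entry is perfect copositive. -/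
open Matrix

/-- The arithmetical minimum of a matrix: infimum of `vᵀQv` over nonzero integer vectors. -/
noncomputable def arithMin {n : ℕ} (Q : Matrix (Fin n) (Fin n) ℝ) : ℝ :=
  sInf {r : ℝ | ∃ v : Fin n → ℤ, v ≠ 0 ∧ r = qf Q (intCast v)}

/-- The set of nonzero integer vectors attaining the arithmetical minimum. -/
def MinSet {n : ℕ} (Q : Matrix (Fin n) (Fin n) ℝ) : Set (Fin n → ℤ) :=
  {v | v ≠ 0 ∧ qf Q (intCast v) = arithMin Q}

/-- A classically perfect matrix: positive definite and uniquely determined among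
symmetric matrices by the equations `vᵀXv = arithMin Q` for `v ∈ MinSet Q`. -/
def IsClassicallyPerfect {n : ℕ} (Q : Matrix (Fin n) (Fin n) ℝ) : Prop :=
  Q.PosDef ∧ ∀ X : Matrix (Fin n) (Fin n) ℝ, X.IsSymm →
    (∀ v ∈ MinSet Q, qf X (intCast v) = arithMin Q) → X = Q

/-! ### Auxiliary lemmas -/

lemma qf_eq2 (B : Matrix (Fin 2) (Fin 2) ℝ) (x : Fin 2 → ℝ) :
    qf B x = B 0 0 * (x 0)^2 + (B 0 1 + B 1 0) * (x 0 * x 1) + B 1 1 * (x 1)^2 := by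
  simp [qf, dotProduct, Matrix.mulVec, Fin.sum_univ_two]
  ring

lemma qf_congr2 (Q : Matrix (Fin 2) (Fin 2) ℝ) {x y : Fin 2 → ℝ}
    (h0 : (x 0)^2 = (y 0)^2) (h1 : (x 1)^2 = (y 1)^2) (h01 : x 0 * x 1 = y 0 * y 1) :
    qf Q x = qf Q y := by rw [qf_eq2, qf_eq2, h0, h1, h01]

lemma intCast_ne_zero' {n : ℕ} {v : Fin n → ℤ} (hv : v ≠ 0) : intCast v ≠ 0 := by
  intro h
  apply hv
  funext i
  have := congrFun h i
  simpa [intCast] using this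

lemma intCast_nonneg' {n : ℕ} {v : Fin n → ℤ} (hv : ∀ i, 0 ≤ v i) : ∀ i, 0 ≤ intCast v i := by
  intro i
  simp only [intCast]
  exact_mod_cast hv i

lemma posDef_qf_pos {n : ℕ} {B : Matrix (Fin n) (Fin n) ℝ} (hB : B.PosDef)
    {x : Fin n → ℝ} (hx : x ≠ 0) : 0 < qf B x := by
  have := hB.dotProduct_mulVec_pos hx
  simpa [qf] using this

lemma copo_bdd {n : ℕ} {B : Matrix (Fin n) (Fin n) ℝ} (hB : StrictlyCopositive B) :
    BddBelow {r : ℝ | ∃ v : Fin n → ℤ, (∀ i, 0 ≤ v i) ∧ v ≠ 0 ∧ r = qf B (intCast v)} := by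
  refine ⟨0, ?_⟩
  rintro r ⟨v, h1, h2, rfl⟩
  exact (hB _ (intCast_nonneg' h1) (intCast_ne_zero' h2)).le

lemma copoMin_le {n : ℕ} {B : Matrix (Fin n) (Fin n) ℝ} (hB : StrictlyCopositive B)
    {v : Fin n → ℤ} (h1 : ∀ i, 0 ≤ v i) (h2 : v ≠ 0) :
    copoMin B ≤ qf B (intCast v) :=
  csInf_le (copo_bdd hB) ⟨v, h1, h2, rfl⟩

lemma arith_bdd {n : ℕ} {B : Matrix (Fin n) (Fin n) ℝ} (hB : B.PosDef) :
    BddBelow {r : ℝ | ∃ v : Fin n → ℤ, v ≠ 0 ∧ r = qf B (intCast v)} := by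
  refine ⟨0, ?_⟩
  rintro r ⟨v, h2, rfl⟩
  exact (posDef_qf_pos hB (intCast_ne_zero' h2)).le

lemma arithMin_le {n : ℕ} {B : Matrix (Fin n) (Fin n) ℝ} (hB : B.PosDef)
    {v : Fin n → ℤ} (h2 : v ≠ 0) :
    arithMin B ≤ qf B (intCast v) :=
  csInf_le (arith_bdd hB) ⟨v, h2, rfl⟩

/-- With negative off-diagonal entry, replacing a vector by its componentwise absolute
value does not increase the quadratic form. -/
lemma qf_abs_le (P : Matrix (Fin 2) (Fin 2) ℝ) (hb : P 0 1 < 0) (hb' : P 1 0 < 0)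
    (x : Fin 2 → ℝ) : qf P (fun i => |x i|) ≤ qf P x := by
  rw [qf_eq2, qf_eq2]
  have h0 : |x 0|^2 = (x 0)^2 := sq_abs _
  have h1 : |x 1|^2 = (x 1)^2 := sq_abs _
  have h01 : x 0 * x 1 ≤ |x 0| * |x 1| := le_trans (le_abs_self _) (abs_mul _ _).le
  have hcoef : P 0 1 + P 1 0 ≤ 0 := by linarith
  have := mul_le_mul_of_nonpos_left h01 hcoef
  rw [h0, h1]
  linarith

lemma abs_vec_ne_zero {x : Fin 2 → ℝ} (hx : x ≠ 0) : (fun i => |x i|) ≠ 0 := by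
  intro h
  apply hx
  funext i
  have := congrFun h i
  simpa using abs_eq_zero.mp this

theorem perfectCopositive_two_dim (P : Matrix (Fin 2) (Fin 2) ℝ) (hP : P.IsSymm) :
    (IsPerfectCopositive P → P.PosDef ∧ P 0 1 < 0) ∧
    ((IsClassicallyPerfect P ∧ P 0 1 < 0) → IsPerfectCopositive P) := by
  have hsymm10 : P 1 0 = P 0 1 := hP.apply 0 1
  constructor
  · rintro ⟨-, hSC, huniq⟩
    -- basic positivity of diagonal entries
    have he0 : (intCast (![1,0] : Fin 2 → ℤ)) = ![1,0] := by
      funext i; fin_cases i <;> simp [intCast]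
    have he1 : (intCast (![0,1] : Fin 2 → ℤ)) = ![0,1] := by
      funext i; fin_cases i <;> simp [intCast]
    have he0ne : (![1,0] : Fin 2 → ℤ) ≠ 0 := by
      intro h; have := congrFun h 0; simp at this
    have he1ne : (![0,1] : Fin 2 → ℤ) ≠ 0 := by
      intro h; have := congrFun h 1; simp at this
    have he0nn : ∀ i, 0 ≤ (![1,0] : Fin 2 → ℤ) i := by
      intro i; fin_cases i <;> norm_num
    have he1nn : ∀ i, 0 ≤ (![0,1] : Fin 2 → ℤ) i := by
      intro i; fin_cases i <;> norm_num
    have hqf_e0 : qf P (intCast (![1,0] : Fin 2 → ℤ)) = P 0 0 := by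
      rw [he0, qf_eq2]; simp
    have hqf_e1 : qf P (intCast (![0,1] : Fin 2 → ℤ)) = P 1 1 := by
      rw [he1, qf_eq2]; simp
    have ha : 0 < P 0 0 := by
      rw [← hqf_e0]
      exact hSC _ (intCast_nonneg' he0nn) (intCast_ne_zero' he0ne)
    have hc : 0 < P 1 1 := by
      rw [← hqf_e1]
      exact hSC _ (intCast_nonneg' he1nn) (intCast_ne_zero' he1ne)
    have hmin_le_a : copoMin P ≤ P 0 0 := hqf_e0 ▸ copoMin_le hSC he0nn he0ne
    -- prove the off-diagonal is negative
    have hb : P 0 1 < 0 := by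
      by_contra hb
      push_neg at hb
      -- every minimizer has a zero coordinate
      have hzero : ∀ v ∈ MinCOP P, (v 0 : ℝ) * (v 1 : ℝ) = 0 := by
        rintro v ⟨hvnn, hvne, hvmin⟩
        by_contra hne
        have h0 : 1 ≤ v 0 := by
          rcases lt_or_eq_of_le (hvnn 0) with h | h
          · omega
          · exfalso; apply hne; rw [← h]; simp
        have h1 : 1 ≤ v 1 := by
          rcases lt_or_eq_of_le (hvnn 1) with h | h
          · omega
          · exfalso; apply hne; rw [← h]; simp
        have h0' : (1:ℝ) ≤ (v 0 : ℝ) := by exact_mod_cast h0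
        have h1' : (1:ℝ) ≤ (v 1 : ℝ) := by exact_mod_cast h1
        have hq : qf P (intCast v) = P 0 0 * ((v 0:ℝ))^2 + (P 0 1 + P 1 0) * ((v 0:ℝ) * (v 1:ℝ))
            + P 1 1 * ((v 1:ℝ))^2 := by rw [qf_eq2]; rfl
        have hge : P 0 0 + P 1 1 ≤ qf P (intCast v) := by
          rw [hq]
          have hb10 : (0:ℝ) ≤ P 1 0 := hsymm10 ▸ hb
          have h0sq : (1:ℝ) ≤ ((v 0:ℝ))^2 := by nlinarith
          have h1sq : (1:ℝ) ≤ ((v 1:ℝ))^2 := by nlinarith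
          have t0 : P 0 0 * 1 ≤ P 0 0 * ((v 0:ℝ))^2 := mul_le_mul_of_nonneg_left h0sq ha.le
          have t1 : P 1 1 * 1 ≤ P 1 1 * ((v 1:ℝ))^2 := mul_le_mul_of_nonneg_left h1sq hc.le
          have t2 : (0:ℝ) ≤ (P 0 1 + P 1 0) * ((v 0:ℝ) * (v 1:ℝ)) := by
            apply mul_nonneg (by linarith)
            nlinarith
          linarith
        have : P 0 0 + P 1 1 ≤ P 0 0 := by
          calc P 0 0 + P 1 1 ≤ qf P (intCast v) := hge
          _ = copoMin P := hvmin
          _ ≤ P 0 0 := hmin_le_a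
        linarith
      -- perturbed matrix
      set S : Matrix (Fin 2) (Fin 2) ℝ := !![0, 1; 1, 0] with hS
      have hQsymm : (P + S).IsSymm := by
        rw [Matrix.IsSymm, Matrix.transpose_add, hP]
        congr 1
        rw [hS]
        ext i j
        fin_cases i <;> fin_cases j <;> simp
      have hQqf : ∀ x : Fin 2 → ℝ, qf (P + S) x = qf P x + 2 * (x 0 * x 1) := by
        intro x
        rw [qf_eq2, qf_eq2, hS]
        simp
        ring
      have := huniq (P + S) hQsymm ?_
      · have h01 := congrFun (congrFun this 0) 1
        simp [hS] at h01
      · rintro v hv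
        have := hzero v hv
        rw [hQqf]
        have : (intCast v) 0 * (intCast v) 1 = 0 := this
        rw [this]
        rw [hv.2.2]
        ring
    refine ⟨?_, hb⟩
    -- positive definiteness
    have hb' : P 1 0 < 0 := hsymm10 ▸ hb
    refine Matrix.PosDef.of_dotProduct_mulVec_pos ?_ ?_
    · rw [Matrix.IsHermitian, Matrix.conjTranspose_eq_transpose_of_trivial]
      exact hP
    · intro x hx
      have h1 : 0 < qf P (fun i => |x i|) :=
        hSC _ (fun i => abs_nonneg _) (abs_vec_ne_zero hx)
      have h2 := qf_abs_le P hb hb' x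
      have : 0 < qf P x := lt_of_lt_of_le h1 h2
      simpa [qf] using this
  · rintro ⟨⟨hPD, huniq⟩, hb⟩
    have hb' : P 1 0 < 0 := hsymm10 ▸ hb
    have hSC : StrictlyCopositive P := fun x _ hx => posDef_qf_pos hPD hx
    refine ⟨hP, hSC, ?_⟩
    intro Q hQsymm hQ
    -- absolute value preserves the value of qf P, for minimizers
    -- first: arithMin P = copoMin P
    have habs_mem : ∀ v : Fin 2 → ℤ, v ≠ 0 →
        ((fun i => |v i|) : Fin 2 → ℤ) ≠ 0 ∧ (∀ i, 0 ≤ |v i|) ∧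
        intCast (fun i => |v i|) = fun i => |(intCast v) i| := by
      intro v hv
      refine ⟨?_, fun i => abs_nonneg _, ?_⟩
      · intro h
        apply hv
        funext i
        have := congrFun h i
        simpa using abs_eq_zero.mp this
      · funext i
        simp [intCast, Int.cast_abs]
    have hqf_abs : ∀ v : Fin 2 → ℤ,
        qf P (intCast (fun i => |v i|)) ≤ qf P (intCast v) := by
      intro v
      have : intCast (fun i : Fin 2 => |v i|) = fun i => |(intCast v) i| := by
        funext i; simp [intCast, Int.cast_abs]
      rw [this]
      exact qf_abs_le P hb hb' (intCast v)
    have hmins : arithMin P = copoMin P := by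
      apply le_antisymm
      · refine le_csInf ⟨qf P (intCast (![1,0] : Fin 2 → ℤ)), ![1,0], ?_, ?_, rfl⟩ ?_
        · intro i; fin_cases i <;> norm_num
        · intro h; have := congrFun h 0; simp at this
        · rintro r ⟨v, h1, h2, rfl⟩
          exact arithMin_le hPD h2
      · refine le_csInf ⟨qf P (intCast (![1,0] : Fin 2 → ℤ)), ![1,0], ?_, rfl⟩ ?_
        · intro h; have := congrFun h 0; simp at this
        · rintro r ⟨v, h2, rfl⟩
          obtain ⟨hane, hann, -⟩ := habs_mem v h2
          calc copoMin P ≤ qf P (intCast (fun i => |v i|)) := copoMin_le hSC hann hane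
          _ ≤ qf P (intCast v) := hqf_abs v
    -- Q satisfies the classical perfection equations
    apply huniq Q hQsymm
    rintro v ⟨hvne, hvmin⟩
    obtain ⟨hane, hann, hacast⟩ := habs_mem v hvne
    -- equality case: qf P |v| = qf P v, forcing v0*v1 = |v0*v1|
    have hle1 : copoMin P ≤ qf P (intCast (fun i => |v i|)) := copoMin_le hSC hann hane
    have hle2 : qf P (intCast (fun i => |v i|)) ≤ qf P (intCast v) := hqf_abs v
    have heq : qf P (intCast (fun i => |v i|)) = qf P (intCast v) := by
      have : qf P (intCast v) = copoMin P := hvmin.trans hmins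
      linarith [hle1, hle2, this.le, this.ge]
    -- from equality extract v0 * v1 = |v0| * |v1|
    have hprod : (intCast v) 0 * (intCast v) 1 = |(intCast v) 0| * |(intCast v) 1| := by
      by_contra hne
      have hle : (intCast v) 0 * (intCast v) 1 ≤ |(intCast v) 0| * |(intCast v) 1| :=
        le_trans (le_abs_self _) (abs_mul _ _).le
      have hlt : (intCast v) 0 * (intCast v) 1 < |(intCast v) 0| * |(intCast v) 1| :=
        lt_of_le_of_ne hle hne
      have hstrict : qf P (intCast (fun i => |v i|)) < qf P (intCast v) := by
        rw [hacast, qf_eq2, qf_eq2]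
        have h0 : |(intCast v) 0|^2 = ((intCast v) 0)^2 := sq_abs _
        have h1 : |(intCast v) 1|^2 = ((intCast v) 1)^2 := sq_abs _
        rw [h0, h1]
        have hcoef : P 0 1 + P 1 0 < 0 := by linarith
        have := mul_lt_mul_of_neg_left hlt hcoef
        linarith
      linarith [heq.le, hstrict]
    -- |v| is in MinCOP P
    have habsmin : (fun i => |v i|) ∈ MinCOP P := by
      refine ⟨hann, hane, ?_⟩
      rw [heq, hvmin, hmins]
    have hQabs := hQ _ habsmin
    -- qf Q v = qf Q |v|
    have : qf Q (intCast v) = qf Q (intCast (fun i => |v i|)) := by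
      apply qf_congr2
      · rw [hacast]; simp [sq_abs]
      · rw [hacast]; simp [sq_abs]
      · rw [hacast]; exact hprod
    rw [this, hQabs, hmins]
end

section
/- The classes of positive semidefinite matrices and of entrywise nonnegative symmetric matrices are each closed under the last-row-duplication lifting: if Q = [[M, m],[mᵀ, μ]] is positive semidefinite (resp. entrywise nonnegative), then Q̃ = [[M, m, m],[mᵀ, μ, μ],[mᵀ, μ, μ]] is positive semidefinite (resp. entrywise nonnegative). Consequently, if Q ∈ S⁺ + N then Q̃ ∈ S⁺ + N, and if Q ∉ S⁺ + N is copositive then Q̃ ∉ S⁺ + N. -/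
open Matrix

/-- Maps the last two indices of `Fin (n+2)` to the last index of `Fin (n+1)`,
and is the identity on the other indices. -/
def contract (n : ℕ) (i : Fin (n + 2)) : Fin (n + 1) :=
  if h : (i : ℕ) < n + 1 then ⟨i, h⟩ else ⟨n, Nat.lt_succ_self n⟩

/-- The lift `Q̃` of `Q`, obtained by duplicating the last row and column. -/
def dupLift {n : ℕ} (Q : Matrix (Fin (n + 1)) (Fin (n + 1)) ℝ) :
    Matrix (Fin (n + 2)) (Fin (n + 2)) ℝ :=
  fun i j => Q (contract n i) (contract n j)

/-- `Q` lies in `S⁺ + N`, i.e. it is a sum of a positive semidefinite matrix and an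
entrywise nonnegative symmetric matrix. -/
def InSplusN {n : ℕ} (Q : Matrix (Fin n) (Fin n) ℝ) : Prop :=
  ∃ A B : Matrix (Fin n) (Fin n) ℝ,
    A.PosSemidef ∧ B.IsSymm ∧ (∀ i j, 0 ≤ B i j) ∧ Q = A + B

/-
Both `Q̃ = Q.submatrix c c` (definitionally, with `c = contract n`) and
`Q = Q̃.submatrix ι ι` (with `ι = Fin.castSucc`) are principal
reindexings, and `S⁺`, `N` and hence `S⁺ + N` are all closed under reindexing `B ↦ B.submatrix f f`.
So `Q ∈ S⁺ + N ↔ Q̃ ∈ S⁺ + N`.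
-/

theorem InSplusN.submatrix {m n : ℕ} {Q : Matrix (Fin n) (Fin n) ℝ} (hQ : InSplusN Q)
    (f : Fin m → Fin n) : InSplusN (Q.submatrix f f) := by
  obtain ⟨A, B, hA, hB, hB_nonneg, rfl⟩ := hQ
  exact ⟨A.submatrix f f, B.submatrix f f, hA.submatrix f, hB.submatrix f,
    fun i j => hB_nonneg (f i) (f j), rfl⟩

theorem contract_castSucc (n : ℕ) (k : Fin (n + 1)) : contract n k.castSucc = k := by
  simp [contract, k.is_lt]

theorem dupLift_submatrix_castSucc {n : ℕ} (Q : Matrix (Fin (n + 1)) (Fin (n + 1)) ℝ) :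
    (dupLift Q).submatrix Fin.castSucc Fin.castSucc = Q := by
  ext i j
  simp [dupLift, contract_castSucc]

theorem lifting_closed_classes_general {n : ℕ} (Q : Matrix (Fin (n + 1)) (Fin (n + 1)) ℝ) :
    (Q.PosSemidef → (dupLift Q).PosSemidef) ∧
    ((∀ i j, 0 ≤ Q i j) → ∀ i j, 0 ≤ dupLift Q i j) ∧
    (InSplusN Q → InSplusN (dupLift Q)) ∧
    ((∀ x : Fin (n + 1) → ℝ, (∀ i, 0 ≤ x i) → 0 ≤ qf Q x) → ¬ InSplusN Q →
      ¬ InSplusN (dupLift Q)) := by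
  refine ⟨fun hQ => hQ.submatrix (contract n), fun hQ i j => hQ _ _,
    fun hQ => hQ.submatrix (contract n), fun _ hQ hLift => hQ ?_⟩
  simpa only [dupLift_submatrix_castSucc] using hLift.submatrix Fin.castSucc

theorem lifting_closed_classes {n : ℕ} (Q : Matrix (Fin (n + 1)) (Fin (n + 1)) ℝ)
    (hQ : Q.IsSymm) :
    (Q.PosSemidef → (dupLift Q).PosSemidef) ∧
    ((∀ i j, 0 ≤ Q i j) → ∀ i j, 0 ≤ dupLift Q i j) ∧
    (InSplusN Q → InSplusN (dupLift Q)) ∧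
    ((∀ x : Fin (n + 1) → ℝ, (∀ i, 0 ≤ x i) → 0 ≤ qf Q x) → ¬ InSplusN Q →
      ¬ InSplusN (dupLift Q)) :=
  lifting_closed_classes_general Q
end

section
/- Let Q be a Minkowski reduced positive definite n×n matrix and suppose there is an integer q > 0 such that |x_j| < q for all x ∈ Min(Q) and all j. Define the lower triangular unimodular matrix W = (w_{ij}) with w_{ij} = q^{i−j} for i ≥ j and w_{ij} = 0 otherwise. Then for every x ∈ Min(Q), the vector Wx lies in ℤ₊ⁿ ∪ (−ℤ₊ⁿ). Consequently, Q is arithmetically equivalent (via U = W^{−1}) to a matrix Q' with Min(Q') ⊆ ±ℤ₊ⁿ. -/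
open Matrix

/-- `Q` is Minkowski reduced. -/
def MinkowskiReduced {n : ℕ} (Q : Matrix (Fin n) (Fin n) ℝ) : Prop :=
  ∀ (v : Fin n → ℤ) (i : Fin n), v ≠ 0 → Finset.gcd (Finset.Ici i) v = 1 →
    Q i i ≤ qf Q (intCast v)

/-! The rows of `W = powLowerTriangular n q` satisfy `(W x)ᵢ₊₁ = q (W x)ᵢ + xᵢ₊₁`. If the first
nonzero coordinate `x_k` of `x` is positive, then `(W x)ᵢ = 0` for `i < k`, `(W x)_k = x_k ≥ 1`,
and inductively `(W x)ᵢ₊₁ ≥ q - (q - 1) = 1` because `|xᵢ₊₁| < q`. Since `W` is unimodular,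
`Min((W⁻¹)ᵀ Q W⁻¹) = W Min(Q)`, which gives the second claim. -/

def powLowerTriangular (n : ℕ) (q : ℤ) : Matrix (Fin n) (Fin n) ℤ :=
  Matrix.of fun i j => if (j : ℕ) ≤ (i : ℕ) then q ^ ((i : ℕ) - (j : ℕ)) else 0

namespace powLowerTriangular

variable {n : ℕ} {q : ℤ}

theorem apply_of_lt {i j : Fin n} (h : i < j) : powLowerTriangular n q i j = 0 :=
  if_neg (Fin.not_le.mpr h)

theorem det_eq_one : (powLowerTriangular n q).det = 1 := by
  rw [det_of_isLowerTriangular _ fun _ _ h => apply_of_lt h]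
  simp [powLowerTriangular]

theorem apply_succ_row {i i' : Fin n} (h : (i' : ℕ) = i + 1) (j : Fin n) :
    powLowerTriangular n q i' j = q * powLowerTriangular n q i j + if j = i' then 1 else 0 := by
  simp only [powLowerTriangular, of_apply, Fin.ext_iff, h]
  split_ifs with h₁ h₂ h₃ h₃ <;> try omega
  · rw [Nat.succ_sub h₂, pow_succ', add_zero]
  · simp [h₃]

theorem mulVec_succ (x : Fin n → ℤ) {i i' : Fin n} (h : (i' : ℕ) = i + 1) :
    (powLowerTriangular n q *ᵥ x) i' = q * (powLowerTriangular n q *ᵥ x) i + x i' := by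
  simp only [mulVec, dotProduct, apply_succ_row h, add_mul, Finset.sum_add_distrib,
    Finset.mul_sum, mul_assoc, ite_mul, one_mul, zero_mul, Finset.sum_ite_eq', Finset.mem_univ,
    if_true]

theorem mulVec_apply_of_forall_lt_eq_zero (x : Fin n → ℤ) {i : Fin n} (hx : ∀ j < i, x j = 0) :
    (powLowerTriangular n q *ᵥ x) i = x i := by
  rw [mulVec, dotProduct, Finset.sum_eq_single i]
  · simp [powLowerTriangular]
  · intro j _ hji
    rcases hji.lt_or_gt with hlt | hgt
    · rw [hx j hlt, mul_zero]
    · rw [apply_of_lt hgt, zero_mul]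
  · simp

variable {x : Fin n → ℤ}

theorem one_le_mulVec_of_le (hx : ∀ j, |x j| < q) {k : Fin n} (hk : 0 < x k)
    (hzero : ∀ j < k, x j = 0) {i : Fin n} (hki : k ≤ i) :
    1 ≤ (powLowerTriangular n q *ᵥ x) i := by
  have hq : 1 ≤ q := by have := hx k; rw [abs_of_pos hk] at this; omega
  suffices ∀ m, (k : ℕ) ≤ m → ∀ hm : m < n, 1 ≤ (powLowerTriangular n q *ᵥ x) ⟨m, hm⟩ from
    this i hki i.2
  intro m hkm
  induction m, hkm using Nat.le_induction with
  | base => intro _; rw [mulVec_apply_of_forall_lt_eq_zero x hzero]; omega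
  | succ m _ ih =>
    intro hm
    rw [mulVec_succ x (i := ⟨m, by omega⟩) rfl]
    have hprev := ih (by omega)
    have hlow := (abs_lt.mp (hx ⟨m + 1, hm⟩)).1
    nlinarith

theorem mulVec_nonneg_of_first_pos (hx : ∀ j, |x j| < q) {k : Fin n} (hk : 0 < x k)
    (hzero : ∀ j < k, x j = 0) (i : Fin n) : 0 ≤ (powLowerTriangular n q *ᵥ x) i := by
  rcases lt_or_ge i k with hik | hki
  · rw [mulVec_apply_of_forall_lt_eq_zero x fun j hj => hzero j (hj.trans hik), hzero i hik]
  · exact (one_le_mulVec_of_le hx hk hzero hki).trans' zero_le_one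

theorem mulVec_nonneg_or_nonpos (hx : ∀ j, |x j| < q) (hx0 : x ≠ 0) :
    (∀ i, 0 ≤ (powLowerTriangular n q *ᵥ x) i) ∨ (∀ i, (powLowerTriangular n q *ᵥ x) i ≤ 0) := by
  obtain ⟨k, hk, hmin⟩ := wellFounded_lt.has_min {j | x j ≠ 0} (Function.ne_iff.mp hx0)
  have hzero : ∀ j < k, x j = 0 := fun j hj => by_contra (hmin j · hj)
  rcases Ne.lt_or_gt hk with hneg | hpos
  · right
    intro i
    have := mulVec_nonneg_of_first_pos (x := -x) (by simpa using hx) (by simpa using hneg)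
      (by simpa using hzero) i
    simpa [mulVec_neg] using this
  · exact .inl (mulVec_nonneg_of_first_pos hx hpos hzero)

end powLowerTriangular

section

variable {n : ℕ}

theorem qf_transpose_mul_mul (Q A : Matrix (Fin n) (Fin n) ℝ) (v : Fin n → ℝ) :
    qf (Aᵀ * Q * A) v = qf Q (A *ᵥ v) := by
  simp only [qf, ← mulVec_mulVec, dotProduct_mulVec, vecMul_transpose]

theorem intCast_mulVec (A : Matrix (Fin n) (Fin n) ℤ) (v : Fin n → ℤ) :
    intCast (A *ᵥ v) = A.map (Int.cast : ℤ → ℝ) *ᵥ intCast v :=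
  funext (RingHom.map_mulVec (Int.castRingHom ℝ) A v)

theorem qf_transpose_mul_mul_intCast (Q : Matrix (Fin n) (Fin n) ℝ)
    (U : Matrix (Fin n) (Fin n) ℤ) (v : Fin n → ℤ) :
    qf ((U.map (Int.cast : ℤ → ℝ))ᵀ * Q * U.map (Int.cast : ℤ → ℝ)) (intCast v) =
      qf Q (intCast (U *ᵥ v)) := by
  rw [qf_transpose_mul_mul, intCast_mulVec]

theorem arithMin_transpose_mul_mul (Q : Matrix (Fin n) (Fin n) ℝ)
    {U : Matrix (Fin n) (Fin n) ℤ} (hU : IsUnit U.det) :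
    arithMin ((U.map (Int.cast : ℤ → ℝ))ᵀ * Q * U.map (Int.cast : ℤ → ℝ)) = arithMin Q := by
  have hmul_inv : ∀ w, U *ᵥ (U⁻¹ *ᵥ w) = w := by simp [mulVec_mulVec, mul_nonsing_inv U hU]
  unfold arithMin
  congr 1
  ext r
  constructor
  · rintro ⟨v, hv, rfl⟩
    exact ⟨U *ᵥ v, fun h => hv (eq_zero_of_mulVec_eq_zero hU.ne_zero h),
      qf_transpose_mul_mul_intCast Q U v⟩
  · rintro ⟨w, hw, rfl⟩
    refine ⟨U⁻¹ *ᵥ w, fun h => hw ?_, by rw [qf_transpose_mul_mul_intCast, hmul_inv]⟩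
    exact eq_zero_of_mulVec_eq_zero (isUnit_nonsing_inv_det U hU).ne_zero h

theorem mulVec_mem_minSet {Q : Matrix (Fin n) (Fin n) ℝ} {U : Matrix (Fin n) (Fin n) ℤ}
    (hU : IsUnit U.det) {v : Fin n → ℤ}
    (hv : v ∈ MinSet ((U.map (Int.cast : ℤ → ℝ))ᵀ * Q * U.map (Int.cast : ℤ → ℝ))) :
    U *ᵥ v ∈ MinSet Q := by
  obtain ⟨hv0, hvmin⟩ := hv
  exact ⟨fun h => hv0 (eq_zero_of_mulVec_eq_zero hU.ne_zero h),
    by rw [← qf_transpose_mul_mul_intCast, hvmin, arithMin_transpose_mul_mul Q hU]⟩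

end

theorem minkowski_reduced_embedding_general {n : ℕ} (Q : Matrix (Fin n) (Fin n) ℝ) (q : ℕ)
    (hbound : ∀ x ∈ MinSet Q, ∀ j, |x j| < (q : ℤ))
    (W : Matrix (Fin n) (Fin n) ℤ)
    (hW : ∀ i j, W i j = if (j : ℕ) ≤ (i : ℕ) then (q : ℤ) ^ ((i : ℕ) - (j : ℕ)) else 0) :
    (∀ x ∈ MinSet Q, (∀ i, 0 ≤ (W *ᵥ x) i) ∨ (∀ i, (W *ᵥ x) i ≤ 0)) ∧
    (∃ U : Matrix (Fin n) (Fin n) ℤ, IsUnit U.det ∧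
      ∀ x ∈ MinSet ((U.map (Int.cast : ℤ → ℝ))ᵀ * Q * U.map (Int.cast : ℤ → ℝ)),
        (∀ i, 0 ≤ x i) ∨ (∀ i, x i ≤ 0)) := by
  have hWq : W = powLowerTriangular n q := Matrix.ext hW
  have hsign : ∀ x ∈ MinSet Q, (∀ i, 0 ≤ (W *ᵥ x) i) ∨ (∀ i, (W *ᵥ x) i ≤ 0) := fun x hx =>
    hWq ▸ powLowerTriangular.mulVec_nonneg_or_nonpos (hbound x hx) hx.1
  have hdet : IsUnit W.det := by rw [hWq, powLowerTriangular.det_eq_one]; exact isUnit_one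
  refine ⟨hsign, W⁻¹, isUnit_nonsing_inv_det W hdet, fun x hx => ?_⟩
  simpa [mulVec_mulVec, mul_nonsing_inv W hdet] using
    hsign _ (mulVec_mem_minSet (isUnit_nonsing_inv_det W hdet) hx)

theorem minkowski_reduced_embedding {n : ℕ} (Q : Matrix (Fin n) (Fin n) ℝ)
    (hQ : Q.PosDef) (hred : MinkowskiReduced Q) (q : ℕ) (hq : 0 < q)
    (hbound : ∀ x ∈ MinSet Q, ∀ j, |x j| < (q : ℤ))
    (W : Matrix (Fin n) (Fin n) ℤ)
    (hW : ∀ i j, W i j = if (j : ℕ) ≤ (i : ℕ) then (q : ℤ) ^ ((i : ℕ) - (j : ℕ)) else 0) :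
    (∀ x ∈ MinSet Q, (∀ i, 0 ≤ (W *ᵥ x) i) ∨ (∀ i, (W *ᵥ x) i ≤ 0)) ∧
    (∃ U : Matrix (Fin n) (Fin n) ℤ, IsUnit U.det ∧
      ∀ x ∈ MinSet ((U.map (Int.cast : ℤ → ℝ))ᵀ * Q * U.map (Int.cast : ℤ → ℝ)),
        (∀ i, 0 ≤ x i) ∨ (∀ i, x i ≤ 0)) :=
  minkowski_reduced_embedding_general Q q hbound W hW
end
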